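/- Let X = X₀ = [[0,1,0],[1,0,0],[0,0,t]] and Y = Y₀·U, where Y₀ = [[1,0,0],[0,0,1],[0,t,0]] and U = [[0,0,t⁻¹],[1,0,0],[0,t,0]] over ℤ[t,t⁻¹]. Then for every integer i ≥ 1, Y^i · X ≠ X · Y^i. -/

import Mathlib

open Matrix LaurentPolynomial

/-!
`Y = Y₀ U` is a monomial matrix with `Y² = diag(1, t², 1)`, so `Yⁱ` has `(1,1)`-entry `tⁱ` and
`(0,0)`-entry `1` or `0` according to the parity of `i`. The `(0,1)`-entries of `Yⁱ X` and `X Yⁱ`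
are these two entries, and `tⁱ` is neither `0` nor, for `i ≠ 0`, `1`.
-/

section

variable {R : Type*} [CommSemiring R]

theorem LaurentPolynomial.T_injective [Nontrivial R] : Function.Injective (T : ℤ → R[T;T⁻¹]) :=
  fun m n h => WithBot.coe_injective <| by rw [← degree_T (R := R) m, h, degree_T]

theorem mul_swap01_apply_zero_one (M : Matrix (Fin 3) (Fin 3) R) (c : R) :
    (M * !![0, 1, 0; 1, 0, 0; 0, 0, c]) 0 1 = M 0 0 := by
  simp [mul_apply, Fin.sum_univ_three]

theorem swap01_mul_apply_zero_one (M : Matrix (Fin 3) (Fin 3) R) (c : R) :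
    (!![0, 1, 0; 1, 0, 0; 0, 0, c] * M) 0 1 = M 1 1 := by
  simp [mul_apply, Fin.sum_univ_three]

theorem caseC_Y₀_mul_U :
    !![1, 0, 0; 0, 0, 1; 0, T 1, 0] * !![0, 0, T (-1); 1, 0, 0; 0, T 1, 0] =
      (!![0, 0, T (-1); 0, T 1, 0; T 1, 0, 0] : Matrix (Fin 3) (Fin 3) R[T;T⁻¹]) := by
  ext a b : 1
  fin_cases a <;> fin_cases b <;> simp [mul_apply, Fin.sum_univ_three]

theorem caseC_Y_sq :
    (!![0, 0, T (-1); 0, T 1, 0; T 1, 0, 0] : Matrix (Fin 3) (Fin 3) R[T;T⁻¹]) ^ 2 =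
      diagonal ![1, T 2, 1] := by
  ext a b : 1
  fin_cases a <;> fin_cases b <;> simp [sq, mul_apply, Fin.sum_univ_three, ← T_add, -T_mul]

theorem caseC_Y_pow_even (k : ℕ) :
    (!![0, 0, T (-1); 0, T 1, 0; T 1, 0, 0] : Matrix (Fin 3) (Fin 3) R[T;T⁻¹]) ^ (2 * k) =
      diagonal ![1, T (2 * k), 1] := by
  rw [pow_mul, caseC_Y_sq, diagonal_pow]
  congr 1
  ext a
  fin_cases a <;> simp [T_pow, mul_comm]

theorem caseC_Y_pow_odd (k : ℕ) :
    (!![0, 0, T (-1); 0, T 1, 0; T 1, 0, 0] : Matrix (Fin 3) (Fin 3) R[T;T⁻¹]) ^ (2 * k + 1) =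
      !![0, 0, T (-1); 0, T (2 * k + 1), 0; T 1, 0, 0] := by
  rw [pow_succ, caseC_Y_pow_even]
  ext a b : 1
  fin_cases a <;> fin_cases b <;> simp [mul_apply, Fin.sum_univ_three, ← T_add, -T_mul]

end

/-- Case (c): X = X₀, Y = Y₀·U.  Then Y^i · X ≠ X · Y^i for every i ≥ 1. -/
theorem stmt7 :
    let X₀ : Matrix (Fin 3) (Fin 3) (LaurentPolynomial ℤ) := !![0, 1, 0; 1, 0, 0; 0, 0, T 1]
    let Y₀ : Matrix (Fin 3) (Fin 3) (LaurentPolynomial ℤ) := !![1, 0, 0; 0, 0, 1; 0, T 1, 0]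
    let U : Matrix (Fin 3) (Fin 3) (LaurentPolynomial ℤ) := !![0, 0, T (-1); 1, 0, 0; 0, T 1, 0]
    let X := X₀
    let Y := Y₀ * U
    ∀ i : ℕ, 1 ≤ i → Y ^ i * X ≠ X * Y ^ i := by
  intro X₀ Y₀ U X Y i hi hcomm
  have hdiag : (Y ^ i) 0 0 = (Y ^ i) 1 1 := by
    simpa only [X, X₀, mul_swap01_apply_zero_one, swap01_mul_apply_zero_one] using
      congrFun (congrFun hcomm 0) 1
  simp only [Y, Y₀, U, caseC_Y₀_mul_U] at hdiag
  obtain ⟨k, rfl | rfl⟩ := Nat.even_or_odd' i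
  · rw [caseC_Y_pow_even] at hdiag
    have : ((2 * k : ℕ) : ℤ) = 0 := T_injective (by simpa using hdiag.symm)
    omega
  · rw [caseC_Y_pow_odd] at hdiag
    exact (isUnit_T (R := ℤ) _).ne_zero (by simpa using hdiag.symm)
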